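/- arXiv:0801.4721 — 6 statements merged into one kernel-verified Lean document; each statement's English description precedes it below -/
import Mathlib

section
/- Let G be a compact, Hausdorff, second countable topological group, H a closed subgroup, Ω = G/H, and let U be a strongly continuous unitary representation of G on a complex separable Hilbert space 𝓗. Let C be a positive bounded operator on 𝓗 such that C U(h) = U(h) C for all h ∈ H and such that ∫_G ⟨ψ, U(g) C U(g)* ψ⟩ dμ_G(g) = ‖ψ‖² for every ψ ∈ 𝓗. Then there exists a unique U-covariant POVM E on Ω such that ⟨ψ, E(X) φ⟩ = ∫_{q⁻¹(X)} ⟨ψ, U(g) C U(g)* φ⟩ dμ_G(g) for every Borel set X ⊆ Ω and all ψ, φ ∈ 𝓗. -/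
open MeasureTheory
open scoped Pointwise ENNReal ComplexInnerProductSpace

noncomputable section

/-- A normalized positive operator valued measure on `Ω` acting in the complex Hilbert
space `𝓗`.  Positivity and `≤ 1` are required for Borel (measurable) sets, `E(Ω) = 1`,
`σ`-additivity holds in the weak operator topology, and (as a normalization convention)
the measure vanishes on non-measurable sets. -/
structure POVM (Ω : Type*) [MeasurableSpace Ω] (𝓗 : Type*) [NormedAddCommGroup 𝓗]
    [InnerProductSpace ℂ 𝓗] [CompleteSpace 𝓗] where
  toFun : Set Ω → (𝓗 →L[ℂ] 𝓗)
  isPositive' : ∀ X : Set Ω, MeasurableSet X → (toFun X).IsPositive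
  le_one' : ∀ X : Set Ω, MeasurableSet X → (1 - toFun X).IsPositive
  normalized' : toFun Set.univ = 1
  not_measurable' : ∀ X : Set Ω, ¬ MeasurableSet X → toFun X = 0
  m_iUnion' : ∀ X : ℕ → Set Ω, (∀ n, MeasurableSet (X n)) →
    Pairwise (Function.onFun Disjoint X) → ∀ φ ψ : 𝓗,
      HasSum (fun n => ⟪φ, toFun (X n) ψ⟫) ⟪φ, toFun (⋃ n, X n) ψ⟫

/-- Covariance of a POVM with respect to a family of unitaries `U`:
`U(g) E(X) U(g)* = E(gX)`, expressed weakly. -/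
def POVM.Covariant {G : Type*} [Group G] {Ω : Type*} [MeasurableSpace Ω] [MulAction G Ω]
    {𝓗 : Type*} [NormedAddCommGroup 𝓗] [InnerProductSpace ℂ 𝓗] [CompleteSpace 𝓗]
    (U : G → 𝓗 ≃ₗᵢ[ℂ] 𝓗) (E : POVM Ω 𝓗) : Prop :=
  ∀ (g : G) (X : Set Ω), MeasurableSet X → ∀ φ ψ : 𝓗,
    ⟪φ, E.toFun (g • X) ψ⟫ = ⟪(U g).symm φ, E.toFun X ((U g).symm ψ)⟫

/-!
The operators `T g = U g ∘ C ∘ (U g)⁻¹` are positive and strongly continuous on the compact group,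
hence uniformly bounded by Banach–Steinhaus, so `E X = ∫_{q⁻¹ X} T g dμ(g)`, taken pointwise as a
Bochner integral, is a bounded positive operator, `σ`-additive in `X` by countable additivity of
the integral, and `E Ω = 1` is exactly the normalization of `C`. Then `1 - E X = E Xᶜ` gives
`E X ≤ 1`. Covariance follows from left invariance of `μ` together with
`T (g * x) = U g ∘ T x ∘ (U g)⁻¹`, and uniqueness because an operator is determined by its matrix
elements.
-/

open ContinuousLinearMap
open scoped ComplexOrder

namespace POVM

variable {Ω : Type*} [MeasurableSpace Ω] {𝓗 : Type*} [NormedAddCommGroup 𝓗]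
  [InnerProductSpace ℂ 𝓗] [CompleteSpace 𝓗]

theorem ext_of_inner {E F : POVM Ω 𝓗}
    (h : ∀ X, MeasurableSet X → ∀ ψ φ : 𝓗, ⟪ψ, E.toFun X φ⟫ = ⟪ψ, F.toFun X φ⟫) : E = F := by
  have h_toFun : E.toFun = F.toFun := by
    funext X
    by_cases hX : MeasurableSet X
    · exact ext fun φ => ext_inner_left ℂ fun ψ => h X hX ψ φ
    · rw [E.not_measurable' X hX, F.not_measurable' X hX]
  cases E
  cases F
  congr

end POVM

section StrongIntegral

variable {α : Type*} [TopologicalSpace α] [CompactSpace α] [MeasurableSpace α]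
  (μ : Measure α) [IsFiniteMeasure μ]

section Normed

variable {E F : Type*} [NormedAddCommGroup E] [NormedSpace ℂ E]
  [NormedAddCommGroup F] [NormedSpace ℂ F]
  {T : α → E →L[ℂ] F} (hT : ∀ φ, Continuous fun a => T a φ)
include hT

theorem integrable_apply_of_continuous [OpensMeasurableSpace α] (φ : E) :
    Integrable (fun a => T a φ) μ :=
  (hT φ).integrable_of_hasCompactSupport (HasCompactSupport.of_compactSpace _)

theorem exists_norm_integral_apply_le [CompleteSpace E] : ∃ M, ∀ φ, ‖∫ a, T a φ ∂μ‖ ≤ M * ‖φ‖ := by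
  obtain ⟨M, hM⟩ := banach_steinhaus fun φ =>
    (isBounded_iff_forall_norm_le.mp (isCompact_range (hT φ)).isBounded).imp
      fun _ h a => h _ ⟨a, rfl⟩
  refine ⟨M * μ.real Set.univ, fun φ => ?_⟩
  calc ‖∫ a, T a φ ∂μ‖ ≤ M * ‖φ‖ * μ.real Set.univ :=
        norm_integral_le_of_norm_le_const (ae_of_all _ fun a => (T a).le_of_opNorm_le (hM a) φ)
    _ = M * μ.real Set.univ * ‖φ‖ := mul_right_comm _ _ _

variable [OpensMeasurableSpace α] [CompleteSpace E]

def strongIntegral : E →L[ℂ] F :=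
  LinearMap.mkContinuousOfExistsBound
    { toFun := fun φ => ∫ a, T a φ ∂μ
      map_add' := fun φ ψ => by
        simp only [map_add]
        exact integral_add (integrable_apply_of_continuous μ hT φ)
          (integrable_apply_of_continuous μ hT ψ)
      map_smul' := fun c φ => by
        simp only [map_smul]
        exact integral_smul c _ }
    (exists_norm_integral_apply_le μ hT)

theorem strongIntegral_restrict_add_compl {s : Set α} (hs : MeasurableSet s) :
    strongIntegral (μ.restrict s) hT + strongIntegral (μ.restrict sᶜ) hT = strongIntegral μ hT :=
  ext fun φ => integral_add_compl hs (integrable_apply_of_continuous μ hT φ)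

end Normed

variable [OpensMeasurableSpace α] {𝓗 : Type*} [NormedAddCommGroup 𝓗] [InnerProductSpace ℂ 𝓗] [CompleteSpace 𝓗]
  {T : α → 𝓗 →L[ℂ] 𝓗} (hT : ∀ φ, Continuous fun a => T a φ)
include hT

theorem inner_strongIntegral_apply (ψ φ : 𝓗) :
    ⟪ψ, strongIntegral μ hT φ⟫ = ∫ a, ⟪ψ, T a φ⟫ ∂μ :=
  (integral_inner (integrable_apply_of_continuous μ hT φ) ψ).symm

theorem strongIntegral_apply_inner (φ ψ : 𝓗) :
    ⟪strongIntegral μ hT φ, ψ⟫ = ∫ a, ⟪T a φ, ψ⟫ ∂μ := by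
  rw [← inner_conj_symm, inner_strongIntegral_apply, ← integral_conj]
  simp_rw [inner_conj_symm]

theorem isPositive_strongIntegral (hT_pos : ∀ a, (T a).IsPositive) :
    (strongIntegral μ hT).IsPositive := by
  refine (isPositive_iff _).mpr ⟨fun φ ψ => ?_, fun φ => ?_⟩
  · simp only [coe_coe]
    rw [strongIntegral_apply_inner, inner_strongIntegral_apply]
    exact integral_congr_ae (ae_of_all _ fun a => (hT_pos a).isSymmetric φ ψ)
  · rw [strongIntegral_apply_inner]
    exact integral_nonneg fun a => (hT_pos a).inner_nonneg_left φ

theorem strongIntegral_eq_one (h : ∀ ψ, ∫ a, ⟪ψ, T a ψ⟫ ∂μ = (‖ψ‖ : ℂ) ^ 2) :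
    strongIntegral μ hT = 1 := by
  refine coe_injective ((ext_inner_map _ _).mp fun ψ => ?_)
  rw [coe_coe, ← inner_conj_symm, inner_strongIntegral_apply, h]
  simp [inner_self_eq_norm_sq_to_K]

end StrongIntegral

namespace POVM

section OfDensity

variable {α : Type*} [TopologicalSpace α] [CompactSpace α] [MeasurableSpace α]
  [OpensMeasurableSpace α] (μ : Measure α) [IsFiniteMeasure μ]
  {Ω : Type*} [MeasurableSpace Ω] {q : α → Ω} (hq : Measurable q)
  {𝓗 : Type*} [NormedAddCommGroup 𝓗] [InnerProductSpace ℂ 𝓗] [CompleteSpace 𝓗]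
  {T : α → 𝓗 →L[ℂ] 𝓗} (hT : ∀ φ, Continuous fun a => T a φ) (hT_pos : ∀ a, (T a).IsPositive)
  (hT_one : strongIntegral μ hT = 1)

open Classical in
def ofDensity : POVM Ω 𝓗 where
  toFun X := if MeasurableSet X then strongIntegral (μ.restrict (q ⁻¹' X)) hT else 0
  isPositive' X hX := by
    rw [if_pos hX]
    exact isPositive_strongIntegral _ hT hT_pos
  le_one' X hX := by
    rw [if_pos hX, ← hT_one, ← strongIntegral_restrict_add_compl μ hT (hq hX), add_sub_cancel_left]
    exact isPositive_strongIntegral _ hT hT_pos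
  normalized' := by
    simp only [if_pos MeasurableSet.univ, Set.preimage_univ, Measure.restrict_univ, hT_one]
  not_measurable' X hX := if_neg hX
  m_iUnion' X hX hd φ ψ := by
    simp only [if_pos (MeasurableSet.iUnion hX), if_pos (hX _), inner_strongIntegral_apply,
      Set.preimage_iUnion]
    exact hasSum_integral_iUnion (fun n => hq (hX n)) (fun i j hij => (hd hij).preimage q)
      ((continuous_const.inner (hT ψ)).integrable_of_hasCompactSupport
        (HasCompactSupport.of_compactSpace _)).integrableOn

variable {μ hq hT hT_pos hT_one}

theorem inner_ofDensity_apply {X : Set Ω} (hX : MeasurableSet X) (ψ φ : 𝓗) :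
    ⟪ψ, (ofDensity μ hq hT hT_pos hT_one).toFun X φ⟫ = ∫ a in q ⁻¹' X, ⟪ψ, T a φ⟫ ∂μ := by
  simp only [ofDensity, if_pos hX, inner_strongIntegral_apply]

end OfDensity

theorem ofDensity_covariant {G : Type*} [Group G] [TopologicalSpace G] [IsTopologicalGroup G]
    [CompactSpace G] [MeasurableSpace G] [BorelSpace G] {μ : Measure G} [IsFiniteMeasure μ]
    [μ.IsMulLeftInvariant] {H : Subgroup G} [MeasurableSpace (G ⧸ H)] [BorelSpace (G ⧸ H)]
    (hq : Measurable (QuotientGroup.mk : G → G ⧸ H))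
    {𝓗 : Type*} [NormedAddCommGroup 𝓗] [InnerProductSpace ℂ 𝓗] [CompleteSpace 𝓗]
    {U : G → 𝓗 ≃ₗᵢ[ℂ] 𝓗} {T : G → 𝓗 →L[ℂ] 𝓗} (hT : ∀ φ, Continuous fun a => T a φ)
    (hT_pos : ∀ a, (T a).IsPositive) (hT_one : strongIntegral μ hT = 1)
    (hT_mul : ∀ g x, T (g * x) = (U g : 𝓗 →L[ℂ] 𝓗) ∘L T x ∘L ((U g).symm : 𝓗 →L[ℂ] 𝓗)) :
    (ofDensity μ hq hT hT_pos hT_one).Covariant U := by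
  intro g X hX φ ψ
  have hpre : (g * ·) ⁻¹' ((QuotientGroup.mk : G → G ⧸ H) ⁻¹' (g • X)) =
      (QuotientGroup.mk : G → G ⧸ H) ⁻¹' X := by
    ext x
    simp only [Set.mem_preimage, Set.mem_smul_set_iff_inv_smul_mem, MulAction.Quotient.smul_mk,
      smul_eq_mul, inv_mul_cancel_left]
  rw [inner_ofDensity_apply (hX.const_smul g), inner_ofDensity_apply hX, ← hpre,
    ← (measurePreserving_mul_left μ g).setIntegral_preimage_emb
      (MeasurableEquiv.mulLeft g).measurableEmbedding]
  simp [hT_mul, LinearIsometryEquiv.inner_map_eq_flip]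

end POVM

namespace LinearIsometryEquiv

theorem continuous_apply_of_continuous {X R E F : Type*} [TopologicalSpace X]
    [Semiring R] [SeminormedAddCommGroup E] [SeminormedAddCommGroup F] [Module R E] [Module R F]
    {U : X → E ≃ₗᵢ[R] F} (hU : ∀ ψ, Continuous fun x => U x ψ) {ψ : X → E} (hψ : Continuous ψ) :
    Continuous fun x => U x (ψ x) := by
  refine continuous_iff_continuousAt.mpr fun x₀ => tendsto_iff_norm_sub_tendsto_zero.mpr ?_
  have hψ₀ := tendsto_iff_norm_sub_tendsto_zero.mp (hψ.tendsto x₀)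
  have hU₀ := tendsto_iff_norm_sub_tendsto_zero.mp ((hU (ψ x₀)).tendsto x₀)
  refine squeeze_zero (fun _ => norm_nonneg _) (fun x => ?_) (by simpa using hψ₀.add hU₀)
  calc ‖U x (ψ x) - U x₀ (ψ x₀)‖ = ‖U x (ψ x - ψ x₀) + (U x (ψ x₀) - U x₀ (ψ x₀))‖ := by
        rw [map_sub, sub_add_sub_cancel]
    _ ≤ ‖ψ x - ψ x₀‖ + ‖U x (ψ x₀) - U x₀ (ψ x₀)‖ := by
        rw [← (U x).norm_map (ψ x - ψ x₀)]
        exact norm_add_le _ _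

variable {G : Type*} [Group G] {𝓗 : Type*} [NormedAddCommGroup 𝓗] [InnerProductSpace ℂ 𝓗]
  {U : G → 𝓗 ≃ₗᵢ[ℂ] 𝓗} (hU_mul : ∀ g₁ g₂ : G, U (g₁ * g₂) = (U g₂).trans (U g₁))
include hU_mul

theorem apply_one_of_map_mul (ψ : 𝓗) : U 1 ψ = ψ :=
  (U 1).injective (by simpa using (DFunLike.congr_fun (hU_mul 1 1) ψ).symm)

theorem symm_apply_eq_apply_inv_of_map_mul (g : G) (ψ : 𝓗) : (U g).symm ψ = U g⁻¹ ψ := by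
  rw [symm_apply_eq, ← trans_apply, ← hU_mul, mul_inv_cancel, apply_one_of_map_mul hU_mul]

end LinearIsometryEquiv

section UnitaryConj

variable {G : Type*} {𝓗 : Type*} [NormedAddCommGroup 𝓗] [InnerProductSpace ℂ 𝓗]
  (U : G → 𝓗 ≃ₗᵢ[ℂ] 𝓗) (C : 𝓗 →L[ℂ] 𝓗)

def unitaryConj (g : G) : 𝓗 →L[ℂ] 𝓗 :=
  (U g : 𝓗 →L[ℂ] 𝓗) ∘L C ∘L ((U g).symm : 𝓗 →L[ℂ] 𝓗)

theorem isPositive_unitaryConj [CompleteSpace 𝓗] (hC : C.IsPositive) (g : G) :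
    (unitaryConj U C g).IsPositive := by
  have h := hC.conj_adjoint (U g : 𝓗 →L[ℂ] 𝓗)
  rwa [LinearIsometryEquiv.adjoint_eq_symm] at h

variable [Group G] {U} (hU_mul : ∀ g₁ g₂ : G, U (g₁ * g₂) = (U g₂).trans (U g₁))
include hU_mul

theorem unitaryConj_mul (g x : G) :
    unitaryConj U C (g * x) =
      (U g : 𝓗 →L[ℂ] 𝓗) ∘L unitaryConj U C x ∘L ((U g).symm : 𝓗 →L[ℂ] 𝓗) := by
  ext φ
  simp [unitaryConj, hU_mul]

theorem continuous_unitaryConj_apply [TopologicalSpace G] [IsTopologicalGroup G]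
    (hU_cont : ∀ ψ : 𝓗, Continuous fun g => U g ψ) (φ : 𝓗) :
    Continuous fun g => unitaryConj U C g φ := by
  have h_symm : Continuous fun g => (U g).symm φ := by
    simp_rw [LinearIsometryEquiv.symm_apply_eq_apply_inv_of_map_mul hU_mul]
    exact (hU_cont φ).comp continuous_inv
  exact LinearIsometryEquiv.continuous_apply_of_continuous hU_cont (C.continuous.comp h_symm)

end UnitaryConj

theorem extremal_covariant_povm_stmt0_general
    {G : Type*} [Group G] [TopologicalSpace G] [IsTopologicalGroup G] [CompactSpace G]
    [MeasurableSpace G] [BorelSpace G]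
    (μG : Measure G) [μG.IsHaarMeasure]
    (H : Subgroup G) [MeasurableSpace (G ⧸ H)] [BorelSpace (G ⧸ H)]
    {𝓗 : Type*} [NormedAddCommGroup 𝓗] [InnerProductSpace ℂ 𝓗] [CompleteSpace 𝓗]
    (U : G → 𝓗 ≃ₗᵢ[ℂ] 𝓗)
    (hU_mul : ∀ g₁ g₂ : G, U (g₁ * g₂) = (U g₂).trans (U g₁))
    (hU_cont : ∀ ψ : 𝓗, Continuous fun g => U g ψ)
    (C : 𝓗 →L[ℂ] 𝓗) (hC_pos : C.IsPositive)
    (hC_norm : ∀ ψ : 𝓗, ∫ g, ⟪ψ, U g (C ((U g).symm ψ))⟫ ∂μG = (‖ψ‖ : ℂ) ^ 2) :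
    ∃! E : POVM (G ⧸ H) 𝓗, E.Covariant U ∧
      ∀ X : Set (G ⧸ H), MeasurableSet X → ∀ ψ φ : 𝓗,
        ⟪ψ, E.toFun X φ⟫ =
          ∫ g in ((QuotientGroup.mk : G → G ⧸ H) ⁻¹' X),
            ⟪ψ, U g (C ((U g).symm φ))⟫ ∂μG := by
  have hq : Measurable (QuotientGroup.mk : G → G ⧸ H) := QuotientGroup.continuous_mk.measurable
  have hT := continuous_unitaryConj_apply C hU_mul hU_cont
  have hT_one : strongIntegral μG hT = 1 := strongIntegral_eq_one μG hT hC_norm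
  refine ⟨POVM.ofDensity μG hq hT (isPositive_unitaryConj U C hC_pos) hT_one,
    ⟨POVM.ofDensity_covariant hq hT _ hT_one (unitaryConj_mul C hU_mul),
      fun X hX ψ φ => POVM.inner_ofDensity_apply hX ψ φ⟩, ?_⟩
  rintro E ⟨-, hE⟩
  exact POVM.ext_of_inner fun X hX ψ φ =>
    (hE X hX ψ φ).trans (POVM.inner_ofDensity_apply (T := unitaryConj U C) hX ψ φ).symm

/-- Davies' construction: a positive operator `C` commuting with `U|_H`
and normalized by `∫_G U(g) C U(g)* dμ_G = I` determines a unique `U`-covariant POVM on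
`Ω = G/H` via `E(X) = ∫_{q⁻¹(X)} U(g) C U(g)* dμ_G(g)`. -/
theorem extremal_covariant_povm_stmt0
    {G : Type*} [Group G] [TopologicalSpace G] [IsTopologicalGroup G] [CompactSpace G]
    [T2Space G] [SecondCountableTopology G] [MeasurableSpace G] [BorelSpace G]
    (μG : Measure G) [μG.IsHaarMeasure] [IsProbabilityMeasure μG]
    (H : Subgroup G) [MeasurableSpace (G ⧸ H)] [BorelSpace (G ⧸ H)]
    {𝓗 : Type*} [NormedAddCommGroup 𝓗] [InnerProductSpace ℂ 𝓗] [CompleteSpace 𝓗]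
    [TopologicalSpace.SeparableSpace 𝓗]
    (U : G → 𝓗 ≃ₗᵢ[ℂ] 𝓗)
    (hU_mul : ∀ g₁ g₂ : G, U (g₁ * g₂) = (U g₂).trans (U g₁))
    (hU_cont : ∀ ψ : 𝓗, Continuous fun g => U g ψ)
    (C : 𝓗 →L[ℂ] 𝓗) (hC_pos : C.IsPositive)
    (hC_comm : ∀ h ∈ H, ∀ ψ : 𝓗, C (U h ψ) = U h (C ψ))
    (hC_norm : ∀ ψ : 𝓗, ∫ g, ⟪ψ, U g (C ((U g).symm ψ))⟫ ∂μG = (‖ψ‖ : ℂ) ^ 2) :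
    ∃! E : POVM (G ⧸ H) 𝓗, E.Covariant U ∧
      ∀ X : Set (G ⧸ H), MeasurableSet X → ∀ ψ φ : 𝓗,
        ⟪ψ, E.toFun X φ⟫ =
          ∫ g in ((QuotientGroup.mk : G → G ⧸ H) ⁻¹' X),
            ⟪ψ, U g (C ((U g).symm φ))⟫ ∂μG :=
  extremal_covariant_povm_stmt0_general μG H U hU_mul hU_cont C hC_pos hC_norm
end
end

section
/- Let G be a compact, Hausdorff, second countable abelian topological group, 𝓗 a complex separable Hilbert space with orthonormal basis (e_π)_{π∈Σ} indexed by a subset Σ ⊆ Ĝ, and U the unitary representation of G on 𝓗 with U(g) e_π = π(g) e_π. Let (v_π)_{π∈Σ} be unit vectors in a Hilbert space 𝒦 and (v'_π)_{π∈Σ} unit vectors in a Hilbert space 𝒦', and suppose that for all π, ρ ∈ Σ and every Borel set X ⊆ G one has ⟨v_ρ, v_π⟩ ∫_X \overline{π(g)} ρ(g) dμ_G(g) = ⟨v'_ρ, v'_π⟩ ∫_X \overline{π(g)} ρ(g) dμ_G(g) (i.e. the two families define the same covariant POVM). Then ⟨v_ρ, v_π⟩ = ⟨v'_ρ, v'_π⟩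 for all π, ρ ∈ Σ. -/
open MeasureTheory
open scoped ComplexInnerProductSpace

/-!
The integrand `g ↦ conj (π g) * ρ g` is continuous of modulus one. If `⟨v_ρ, v_π⟩ ≠ ⟨v'_ρ, v'_π⟩`,
the hypothesis forces its integral over every Borel set to vanish, so it vanishes almost
everywhere, hence everywhere since Haar measure charges every nonempty open set: impossible
for a function of modulus one.
-/

theorem Continuous.eq_zero_of_forall_setIntegral_eq_zero
    {X E : Type*} [TopologicalSpace X] [MeasurableSpace X] {μ : Measure X} [μ.IsOpenPosMeasure]
    [NormedAddCommGroup E] [NormedSpace ℝ E] [CompleteSpace E] {f : X → E} (hf : Continuous f)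
    (hf_int : Integrable f μ) (hf_zero : ∀ s, MeasurableSet s → ∫ x in s, f x ∂μ = 0) :
    f = 0 :=
  (hf.ae_eq_iff_eq μ continuous_zero).mp
    (hf_int.ae_eq_zero_of_forall_setIntegral_eq_zero fun s hs _ ↦ hf_zero s hs)

theorem extremal_covariant_povm_stmt8_general
    {G : Type*} [CommGroup G] [TopologicalSpace G] [MeasurableSpace G] [BorelSpace G]
    (μG : Measure G) [μG.IsHaarMeasure] [IsProbabilityMeasure μG]
    {ι : Type*}
    (χ : ι → G → ℂ)
    (hχ_cont : ∀ i, Continuous (χ i))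
    (hχ_norm : ∀ i g, ‖χ i g‖ = 1)
    {𝒦 : Type*} [NormedAddCommGroup 𝒦] [InnerProductSpace ℂ 𝒦]
    {𝒦' : Type*} [NormedAddCommGroup 𝒦'] [InnerProductSpace ℂ 𝒦']
    (v : ι → 𝒦)
    (v' : ι → 𝒦')
    (heq : ∀ (i j : ι) (X : Set G), MeasurableSet X →
      ⟪v j, v i⟫ * ∫ g in X, (starRingEnd ℂ) (χ i g) * χ j g ∂μG =
        ⟪v' j, v' i⟫ * ∫ g in X, (starRingEnd ℂ) (χ i g) * χ j g ∂μG) :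
    ∀ i j : ι, ⟪v j, v i⟫ = ⟪v' j, v' i⟫ := by
  intro i j
  by_contra hne
  set f : G → ℂ := fun g ↦ (starRingEnd ℂ) (χ i g) * χ j g
  have hf_cont : Continuous f := (Complex.continuous_conj.comp (hχ_cont i)).mul (hχ_cont j)
  have hf_norm : ∀ g, ‖f g‖ = 1 := fun g ↦ by simp [f, hχ_norm]
  have hf_int : Integrable f μG :=
    .of_bound hf_cont.aestronglyMeasurable 1 (.of_forall fun g ↦ (hf_norm g).le)
  have hf_zero : f = 0 := hf_cont.eq_zero_of_forall_setIntegral_eq_zero hf_int fun X hX ↦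
    (mul_eq_mul_right_iff.mp (heq i j X hX)).resolve_left hne
  simpa [hf_zero] using hf_norm 1

/-- (Compact abelian `G` acting on itself, multiplicity free case.)
Two families of unit vectors defining the same covariant POVM have the same Gram
matrix: if `⟨v_ρ, v_π⟩ ∫_X conj π ρ dμ_G = ⟨v'_ρ, v'_π⟩ ∫_X conj π ρ dμ_G` for all
Borel `X`, then `⟨v_ρ, v_π⟩ = ⟨v'_ρ, v'_π⟩`. -/
theorem extremal_covariant_povm_stmt8
    {G : Type*} [CommGroup G] [TopologicalSpace G] [IsTopologicalGroup G] [CompactSpace G]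
    [T2Space G] [SecondCountableTopology G] [MeasurableSpace G] [BorelSpace G]
    (μG : Measure G) [μG.IsHaarMeasure] [IsProbabilityMeasure μG]
    {ι : Type*}
    (χ : ι → G → ℂ)
    (hχ_cont : ∀ i, Continuous (χ i))
    (hχ_mul : ∀ i (g g' : G), χ i (g * g') = χ i g * χ i g')
    (hχ_norm : ∀ i g, ‖χ i g‖ = 1)
    {𝓗 : Type*} [NormedAddCommGroup 𝓗] [InnerProductSpace ℂ 𝓗] [CompleteSpace 𝓗]
    (e : HilbertBasis ι ℂ 𝓗)
    (U : G → 𝓗 ≃ₗᵢ[ℂ] 𝓗)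
    (hU : ∀ (g : G) (i : ι), U g (e i) = χ i g • e i)
    {𝒦 : Type*} [NormedAddCommGroup 𝒦] [InnerProductSpace ℂ 𝒦] [CompleteSpace 𝒦]
    {𝒦' : Type*} [NormedAddCommGroup 𝒦'] [InnerProductSpace ℂ 𝒦'] [CompleteSpace 𝒦']
    (v : ι → 𝒦) (hv : ∀ i, ‖v i‖ = 1)
    (v' : ι → 𝒦') (hv' : ∀ i, ‖v' i‖ = 1)
    (heq : ∀ (i j : ι) (X : Set G), MeasurableSet X →
      ⟪v j, v i⟫ * ∫ g in X, (starRingEnd ℂ) (χ i g) * χ j g ∂μG =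
        ⟪v' j, v' i⟫ * ∫ g in X, (starRingEnd ℂ) (χ i g) * χ j g ∂μG) :
    ∀ i j : ι, ⟪v j, v i⟫ = ⟪v' j, v' i⟫ :=
  extremal_covariant_povm_stmt8_general μG χ hχ_cont hχ_norm v v' heq
end

section
/- Let X be a set, 𝓗 a complex Hilbert space, and K : X × X → L(𝓗) a map with values in the bounded operators on 𝓗 which is of positive type: for every finitely supported family (v_x)_{x∈X} of vectors of 𝓗, the sum Σ_{x,y∈X} ⟨v_x, K(x,y) v_y⟩ is a nonnegative real number. Then there exist a complex Hilbert space ℋ and a family of bounded operators γ_x : 𝓗 → ℋ (x ∈ X) such that K(x,y) = γ_x* ∘ γ_y for all x, y ∈ X and the linear span of ∪_{x∈X} range(γ_x) is dense in ℋ. -/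
/-!
Positivity of the quadratic forms `∑ x ∈ s, ∑ y ∈ s, ⟪v x, K x y (v y)⟫` makes them real-valued,
hence, by complex polarization, Hermitian; so `K` is a positive semidefinite operator matrix.
The factorization is then its Kolmogorov decomposition, realized by the reproducing kernel
Hilbert space `RKHS.OfKernel K`: its kernel functions `γ x` satisfy `K x y = (γ x)† ∘ γ y` and
have dense span.
-/

open scoped ComplexInnerProductSpace ComplexOrder

noncomputable section

universe u v

/-- A factorization `K(x,y) = γ_x* ∘ γ_y` of an operator valued kernel through a complex
Hilbert space, with total range. -/
structure KernelFactorization {X : Type u} {𝓗 : Type v} [NormedAddCommGroup 𝓗]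
    [InnerProductSpace ℂ 𝓗] [CompleteSpace 𝓗] (K : X → X → 𝓗 →L[ℂ] 𝓗) where
  space : Type (max u v)
  [normedAddCommGroup : NormedAddCommGroup space]
  [innerProductSpace : InnerProductSpace ℂ space]
  [completeSpace : CompleteSpace space]
  gamma : ∀ _ : X, 𝓗 →L[ℂ] space
  factorizes : ∀ x y : X, K x y = (ContinuousLinearMap.adjoint (gamma x)).comp (gamma y)
  total : Dense ((Submodule.span ℂ (⋃ x : X, Set.range (gamma x)) : Submodule ℂ space) : Set space)

universe w

theorem LinearMap.isSymm_of_forall_im_apply_self_eq_zero {E : Type*} [AddCommGroup E]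
    [Module ℂ E] {B : E →ₗ⋆[ℂ] E →ₗ[ℂ] ℂ} (hB : ∀ x, (B x x).im = 0) : B.IsSymm := by
  refine ⟨fun x y => ?_⟩
  have h₁ := hB (x + y)
  have h₂ := hB (x + Complex.I • y)
  simp only [map_add, add_apply, Complex.add_im, hB, zero_add, add_zero, LinearMap.map_smulₛₗ,
    Complex.conj_I, neg_smul, map_smul, smul_eq_mul, neg_apply, smul_apply, Complex.mul_im,
    Complex.I_re, zero_mul, Complex.I_im, one_mul, Complex.neg_im, mul_zero, Complex.add_re,
    Complex.neg_re, Complex.mul_re, sub_self, neg_zero] at h₁ h₂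
  apply Complex.ext
  · rw [Complex.conj_re]; linarith
  · rw [Complex.conj_im]; linarith

section KernelForm

variable {X : Type*} {𝓗 : Type*} [SeminormedAddCommGroup 𝓗] [InnerProductSpace ℂ 𝓗]

def kernelForm (K : X → X → 𝓗 →L[ℂ] 𝓗) (s : Finset X) : (X → 𝓗) →ₗ⋆[ℂ] (X → 𝓗) →ₗ[ℂ] ℂ :=
  ∑ x ∈ s, ∑ y ∈ s,
    ((innerₛₗ ℂ).comp (LinearMap.proj x)).compl₂ ((K x y : 𝓗 →ₗ[ℂ] 𝓗) ∘ₗ LinearMap.proj y)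

theorem kernelForm_apply (K : X → X → 𝓗 →L[ℂ] 𝓗) (s : Finset X) (v w : X → 𝓗) :
    kernelForm K s v w = ∑ x ∈ s, ∑ y ∈ s, ⟪v x, K x y (w y)⟫ := by
  simp [kernelForm]

theorem kernelForm_single_single [DecidableEq X] (K : X → X → 𝓗 →L[ℂ] 𝓗) {s : Finset X}
    {x y : X} (hx : x ∈ s) (hy : y ∈ s) (u v : 𝓗) :
    kernelForm K s (Pi.single x u) (Pi.single y v) = ⟪u, K x y v⟫ := by
  rw [kernelForm_apply, Finset.sum_eq_single_of_mem x hx, Finset.sum_eq_single_of_mem y hy]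
  · simp
  · intro b _ hb; simp [hb]
  · intro b _ hb; simp [hb]

def IsPositiveType (K : X → X → 𝓗 →L[ℂ] 𝓗) : Prop :=
  ∀ (s : Finset X) (v : X → 𝓗), 0 ≤ ∑ x ∈ s, ∑ y ∈ s, ⟪v x, K x y (v y)⟫

theorem IsPositiveType.isSymm_kernelForm {K : X → X → 𝓗 →L[ℂ] 𝓗} (hK : IsPositiveType K)
    (s : Finset X) : (kernelForm K s).IsSymm :=
  LinearMap.isSymm_of_forall_im_apply_self_eq_zero fun v => by
    rw [kernelForm_apply]
    exact (Complex.nonneg_iff.mp (hK s v)).2.symm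

end KernelForm

namespace IsPositiveType

variable {X : Type*} {𝓗 : Type*} [NormedAddCommGroup 𝓗] [InnerProductSpace ℂ 𝓗]
  [CompleteSpace 𝓗] {K : X → X → 𝓗 →L[ℂ] 𝓗}

theorem isHermitian (hK : IsPositiveType K) :
    Matrix.IsHermitian (K : Matrix X X (𝓗 →L[ℂ] 𝓗)) := by
  classical
  refine Matrix.IsHermitian.ext fun x y => ContinuousLinearMap.ext fun v =>
    ext_inner_left ℂ fun u => ?_
  have hx : x ∈ ({x, y} : Finset X) := by simp
  have hy : y ∈ ({x, y} : Finset X) := by simp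
  rw [ContinuousLinearMap.star_eq_adjoint, ContinuousLinearMap.adjoint_inner_right,
    ← inner_conj_symm, ← kernelForm_single_single K hy hx, ← kernelForm_single_single K hx hy]
  exact (hK.isSymm_kernelForm _).eq _ _

theorem posSemidef (hK : IsPositiveType K) :
    Matrix.PosSemidef (K : Matrix X X (𝓗 →L[ℂ] 𝓗)) := by
  have tfae := (RKHS.posSemidef_tfae (K := (K : Matrix X X (𝓗 →L[ℂ] 𝓗)))).out 2 0
  refine tfae.mp ⟨hK.isHermitian, fun v => ?_⟩
  convert (RCLike.nonneg_iff.mp (hK v.support v)).1 using 1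
  rw [Finsupp.sum, Finset.sum_comm]
  simp only [Finsupp.sum, map_sum]
  exact Finset.sum_congr rfl fun _ _ => Finset.sum_congr rfl fun _ _ => inner_re_symm _ _

end IsPositiveType

theorem Matrix.PosSemidef.exists_kolmogorov_decomposition {𝕜 : Type w} [RCLike 𝕜] {X : Type u}
    {V : Type v} [NormedAddCommGroup V] [InnerProductSpace 𝕜 V] [CompleteSpace V]
    {K : Matrix X X (V →L[𝕜] V)} (hK : K.PosSemidef) :
    ∃ (H : Type (max u v w)) (_ : NormedAddCommGroup H) (_ : InnerProductSpace 𝕜 H)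
      (_ : CompleteSpace H) (γ : X → V →L[𝕜] H),
      (∀ x y, K x y = (γ x).adjoint ∘L γ y) ∧
        Dense (Submodule.span 𝕜 (⋃ x, Set.range (γ x)) : Set H) := by
  have : Fact K.PosSemidef := ⟨hK⟩
  refine ⟨RKHS.OfKernel K, inferInstance, inferInstance, inferInstance, RKHS.kerFun _,
    fun x y => ?_, ?_⟩
  · rw [← RKHS.kernel_apply, RKHS.OfKernel.kernel_ofKernel]
  · rw [Submodule.dense_iff_topologicalClosure_eq_top]
    convert RKHS.kerFun_dense (RKHS.OfKernel K)
    ext; simp [eq_comm]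

/-- Every operator valued kernel of positive type factorizes as
`K(x,y) = γ_x* ∘ γ_y` through some Hilbert space, with the ranges of the `γ_x` total. -/
theorem extremal_covariant_povm_stmt9 {X : Type u} {𝓗 : Type v} [NormedAddCommGroup 𝓗]
    [InnerProductSpace ℂ 𝓗] [CompleteSpace 𝓗] (K : X → X → 𝓗 →L[ℂ] 𝓗)
    (hpos : ∀ (s : Finset X) (v : X → 𝓗),
      0 ≤ ∑ x ∈ s, ∑ y ∈ s, ⟪v x, (K x y) (v y)⟫) :
    Nonempty (KernelFactorization K) := by
  obtain ⟨H, _, _, _, γ, hfactor, hdense⟩ :=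
    (IsPositiveType.posSemidef hpos).exists_kolmogorov_decomposition
  exact ⟨⟨H, γ, hfactor, hdense⟩⟩
end
end

section
/- Let H be a group, X a set, 𝓗 a complex Hilbert space, and U a unitary representation of H on 𝓗. For i = 1, 2, let ℋ_i be a complex Hilbert space carrying a unitary representation V_i of H, and let γ^i_x : 𝓗 → ℋ_i (x ∈ X) be bounded operators such that: (1) γ^i_x ∘ U(h) = V_i(h) ∘ γ^i_x for all h ∈ H and x ∈ X; (2) the linear span of ∪_{x∈X} range(γ^i_x) is dense in ℋ_i; (3) (γ^1_x)* ∘ γ^1_y = (γ^2_x)* ∘ γ^2_y for all x, y ∈ X. Then there exists a unitary operator W : ℋ_1 → ℋ_2 such that W ∘ V_1(h) = V_2(h) ∘ W for all h ∈ H and W ∘ γ^1_x = γ^2_x for all x ∈ X. -/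
/-!
The kernel identity says that the families `γ¹_x ψ` and `γ²_x ψ`, indexed by pairs `(x, ψ)`,
have the same Gram matrix. Hence `γ¹_x ψ ↦ γ²_x ψ` extends linearly and isometrically to a map
between their closed spans, i.e. to a unitary `W : ℋ₁ → ℋ₂`. Both `W V₁(h)` and `V₂(h) W` send
`γ¹_x ψ` to `γ²_x (U(h) ψ)`, so they agree on a total set and `W` is an intertwiner.
-/

open Finsupp
open scoped InnerProductSpace

section

variable {ι 𝕜 E F : Type*} [RCLike 𝕜]
  [NormedAddCommGroup E] [InnerProductSpace 𝕜 E] [NormedAddCommGroup F] [InnerProductSpace 𝕜 F]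

theorem ContinuousLinearMap.inner_apply_eq_of_adjoint_comp_eq {G : Type*} [NormedAddCommGroup G]
    [InnerProductSpace 𝕜 G] [CompleteSpace E] [CompleteSpace F] [CompleteSpace G]
    {A₁ B₁ : G →L[𝕜] E} {A₂ B₂ : G →L[𝕜] F} (h : adjoint A₁ ∘L B₁ = adjoint A₂ ∘L B₂)
    (a b : G) : ⟪A₁ a, B₁ b⟫_𝕜 = ⟪A₂ a, B₂ b⟫_𝕜 := by
  rw [← adjoint_inner_right, ← adjoint_inner_right]
  exact congrArg (fun T : G →L[𝕜] G => ⟪a, T b⟫_𝕜) h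

theorem inner_linearCombination_eq_of_inner_eq {v : ι → E} {w : ι → F}
    (h : ∀ i j, ⟪v i, v j⟫_𝕜 = ⟪w i, w j⟫_𝕜) (c d : ι →₀ 𝕜) :
    ⟪linearCombination 𝕜 v c, linearCombination 𝕜 v d⟫_𝕜 =
      ⟪linearCombination 𝕜 w c, linearCombination 𝕜 w d⟫_𝕜 := by
  simp only [linearCombination_apply, Finsupp.sum, sum_inner, inner_sum, inner_smul_left,
    inner_smul_right, h]

theorem norm_linearCombination_eq_of_inner_eq {v : ι → E} {w : ι → F}
    (h : ∀ i j, ⟪v i, v j⟫_𝕜 = ⟪w i, w j⟫_𝕜) (c : ι →₀ 𝕜) :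
    ‖linearCombination 𝕜 w c‖ = ‖linearCombination 𝕜 v c‖ := by
  rw [norm_eq_sqrt_re_inner (𝕜 := 𝕜), norm_eq_sqrt_re_inner (𝕜 := 𝕜),
    inner_linearCombination_eq_of_inner_eq h]

theorem Finsupp.denseRange_linearCombination {R M : Type*} [Semiring R] [AddCommMonoid M]
    [Module R M] [TopologicalSpace M] {v : ι → M} :
    DenseRange (linearCombination R v) ↔ Dense (Submodule.span R (Set.range v) : Set M) := by
  rw [DenseRange, ← LinearMap.coe_range, range_linearCombination]

theorem exists_linearIsometryEquiv_apply_eq_of_inner_eq [CompleteSpace E] [CompleteSpace F]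
    {v : ι → E} {w : ι → F} (hv : Dense (Submodule.span 𝕜 (Set.range v) : Set E))
    (hw : Dense (Submodule.span 𝕜 (Set.range w) : Set F))
    (h : ∀ i j, ⟪v i, v j⟫_𝕜 = ⟪w i, w j⟫_𝕜) :
    ∃ W : E ≃ₗᵢ[𝕜] F, ∀ i, W (v i) = w i := by
  -- No quotient by the common kernel is needed: the norm identity makes the extension well defined.
  refine ⟨(LinearEquiv.refl 𝕜 (ι →₀ 𝕜)).extendOfIsometry _ _ (denseRange_linearCombination.2 hv)
    (denseRange_linearCombination.2 hw) (norm_linearCombination_eq_of_inner_eq h), fun i => ?_⟩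
  simpa using LinearEquiv.extendOfIsometry_eq (LinearEquiv.refl 𝕜 (ι →₀ 𝕜)) _ _
    (denseRange_linearCombination.2 hv) (denseRange_linearCombination.2 hw)
    (norm_linearCombination_eq_of_inner_eq h) (single i 1)

end

theorem extremal_covariant_povm_stmt10_general
    {H : Type*} {X : Type*}
    {𝓗 : Type*} [NormedAddCommGroup 𝓗] [InnerProductSpace ℂ 𝓗] [CompleteSpace 𝓗]
    {ℋ₁ : Type*} [NormedAddCommGroup ℋ₁] [InnerProductSpace ℂ ℋ₁] [CompleteSpace ℋ₁]
    {ℋ₂ : Type*} [NormedAddCommGroup ℋ₂] [InnerProductSpace ℂ ℋ₂] [CompleteSpace ℋ₂]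
    (U : H → 𝓗 ≃ₗᵢ[ℂ] 𝓗)
    (V₁ : H → ℋ₁ ≃ₗᵢ[ℂ] ℋ₁)
    (V₂ : H → ℋ₂ ≃ₗᵢ[ℂ] ℋ₂)
    (γ₁ : X → 𝓗 →L[ℂ] ℋ₁) (γ₂ : X → 𝓗 →L[ℂ] ℋ₂)
    (hint₁ : ∀ (h : H) (x : X) (ψ : 𝓗), γ₁ x (U h ψ) = V₁ h (γ₁ x ψ))
    (hint₂ : ∀ (h : H) (x : X) (ψ : 𝓗), γ₂ x (U h ψ) = V₂ h (γ₂ x ψ))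
    (htotal₁ : Dense ((Submodule.span ℂ (⋃ x : X, Set.range (γ₁ x)) : Submodule ℂ ℋ₁) : Set ℋ₁))
    (htotal₂ : Dense ((Submodule.span ℂ (⋃ x : X, Set.range (γ₂ x)) : Submodule ℂ ℋ₂) : Set ℋ₂))
    (hker : ∀ x y : X,
      (ContinuousLinearMap.adjoint (γ₁ x)).comp (γ₁ y) =
        (ContinuousLinearMap.adjoint (γ₂ x)).comp (γ₂ y)) :
    ∃ W : ℋ₁ ≃ₗᵢ[ℂ] ℋ₂,
      (∀ (h : H) (f : ℋ₁), W (V₁ h f) = V₂ h (W f)) ∧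
      ∀ (x : X) (ψ : 𝓗), W (γ₁ x ψ) = γ₂ x ψ := by
  obtain ⟨W, hW⟩ := exists_linearIsometryEquiv_apply_eq_of_inner_eq
    (v := fun p : Σ _ : X, 𝓗 => γ₁ p.1 p.2) (w := fun p => γ₂ p.1 p.2)
    (by rwa [Set.range_sigma_eq_iUnion_range]) (by rwa [Set.range_sigma_eq_iUnion_range])
    (fun p q => ContinuousLinearMap.inner_apply_eq_of_adjoint_comp_eq (hker p.1 q.1) p.2 q.2)
  have hWγ (x : X) (ψ : 𝓗) : W (γ₁ x ψ) = γ₂ x ψ := hW ⟨x, ψ⟩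
  refine ⟨W, fun h f => ?_, hWγ⟩
  have hcomm : (W : ℋ₁ →L[ℂ] ℋ₂) ∘L (V₁ h : ℋ₁ →L[ℂ] ℋ₁) = (V₂ h : ℋ₂ →L[ℂ] ℋ₂) ∘L W := by
    refine ContinuousLinearMap.ext_on htotal₁ fun φ hφ => ?_
    obtain ⟨x, ψ, rfl⟩ := Set.mem_iUnion.1 hφ
    simp only [ContinuousLinearMap.comp_apply, LinearIsometryEquiv.coe_coe'', ← hint₁, ← hint₂,
      hWγ]
  exact congrArg (· f) hcomm

/-- Uniqueness of the minimal covariant factorization: two families of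
operators `γ¹, γ²` with total ranges, intertwining a unitary representation `U` of `H`
with unitary representations `V₁, V₂`, and having the same kernels
`(γ¹_x)* γ¹_y = (γ²_x)* γ²_y`, are related by a unitary intertwiner `W`. -/
theorem extremal_covariant_povm_stmt10
    {H : Type*} [Group H] {X : Type*}
    {𝓗 : Type*} [NormedAddCommGroup 𝓗] [InnerProductSpace ℂ 𝓗] [CompleteSpace 𝓗]
    {ℋ₁ : Type*} [NormedAddCommGroup ℋ₁] [InnerProductSpace ℂ ℋ₁] [CompleteSpace ℋ₁]
    {ℋ₂ : Type*} [NormedAddCommGroup ℋ₂] [InnerProductSpace ℂ ℋ₂] [CompleteSpace ℋ₂]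
    (U : H → 𝓗 ≃ₗᵢ[ℂ] 𝓗)
    (hU_mul : ∀ h₁ h₂ : H, U (h₁ * h₂) = (U h₂).trans (U h₁))
    (V₁ : H → ℋ₁ ≃ₗᵢ[ℂ] ℋ₁)
    (hV₁_mul : ∀ h₁ h₂ : H, V₁ (h₁ * h₂) = (V₁ h₂).trans (V₁ h₁))
    (V₂ : H → ℋ₂ ≃ₗᵢ[ℂ] ℋ₂)
    (hV₂_mul : ∀ h₁ h₂ : H, V₂ (h₁ * h₂) = (V₂ h₂).trans (V₂ h₁))
    (γ₁ : X → 𝓗 →L[ℂ] ℋ₁) (γ₂ : X → 𝓗 →L[ℂ] ℋ₂)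
    (hint₁ : ∀ (h : H) (x : X) (ψ : 𝓗), γ₁ x (U h ψ) = V₁ h (γ₁ x ψ))
    (hint₂ : ∀ (h : H) (x : X) (ψ : 𝓗), γ₂ x (U h ψ) = V₂ h (γ₂ x ψ))
    (htotal₁ : Dense ((Submodule.span ℂ (⋃ x : X, Set.range (γ₁ x)) : Submodule ℂ ℋ₁) : Set ℋ₁))
    (htotal₂ : Dense ((Submodule.span ℂ (⋃ x : X, Set.range (γ₂ x)) : Submodule ℂ ℋ₂) : Set ℋ₂))
    (hker : ∀ x y : X,
      (ContinuousLinearMap.adjoint (γ₁ x)).comp (γ₁ y) =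
        (ContinuousLinearMap.adjoint (γ₂ x)).comp (γ₂ y)) :
    ∃ W : ℋ₁ ≃ₗᵢ[ℂ] ℋ₂,
      (∀ (h : H) (f : ℋ₁), W (V₁ h f) = V₂ h (W f)) ∧
      ∀ (x : X) (ψ : 𝓗), W (γ₁ x ψ) = γ₂ x ψ :=
  extremal_covariant_povm_stmt10_general U V₁ V₂ γ₁ γ₂ hint₁ hint₂ htotal₁ htotal₂ hker
end

section
/- Let G be a compact, Hausdorff, second countable abelian topological group, 𝓗 a complex separable Hilbert space with orthonormal basis (e_π)_{π∈Σ} indexed by a subset Σ ⊆ Ĝ, and U the unitary representation of G on 𝓗 with U(g) e_π = π(g) e_π. Let v be a unit vector in a complex Hilbert space 𝒦, let (c_π)_{π∈Σ} be complex numbers with |c_π| = 1, set v_π = c_π v, and let E be the U-covariant POVM on G determined by ⟨e_ρ, E(X) e_π⟩ = ⟨v_ρ, v_π⟩ ∫_X \overline{π(g)} ρ(g) dμ_G(g). Then E is an extreme point of the convex set of all U-covariant POVMs on G. -/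
open MeasureTheory
open scoped Pointwise ENNReal ComplexInnerProductSpace

noncomputable section

def POVM.IsExtremeCovariant {G : Type*} [Group G] {Ω : Type*} [MeasurableSpace Ω]
    [MulAction G Ω] {𝓗 : Type*} [NormedAddCommGroup 𝓗] [InnerProductSpace ℂ 𝓗]
    [CompleteSpace 𝓗] (U : G → 𝓗 ≃ₗᵢ[ℂ] 𝓗) (E : POVM Ω 𝓗) : Prop :=
  ∀ E₁ E₂ : POVM Ω 𝓗, E₁.Covariant U → E₂.Covariant U →
    ∀ t : ℝ, 0 < t → t < 1 →
      (∀ X : Set Ω, E.toFun X = (t : ℂ) • E₁.toFun X + ((1 - t : ℝ) : ℂ) • E₂.toFun X) →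
      E₁ = E ∧ E₂ = E

/-!
For a `U`-covariant POVM `F`, the positive measure `X ↦ ⟪e i, F X (e i)⟫` is a left-invariant
probability measure on the compact group `G`, hence it is `μG`. Cauchy–Schwarz for the positive
operators `F X` then bounds the complex measure `X ↦ ⟪e j, F X (e i)⟫` by `μG`, so its density
with respect to `μG` has modulus at most one. For `E` this density,
`g ↦ conj (c j) * c i * conj (χ i g) * χ j g`, has modulus one everywhere. Points of the unit
circle are extreme points of the closed unit disc, so a decomposition `E = t E₁ + (1 - t) E₂`
forces the densities of `E₁` and `E₂` to agree with that of `E` almost everywhere.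
-/

open ComplexConjugate

theorem Complex.norm_le_of_forall_re_conj_mul_le {ι : Type*} {w : ι → ℂ} (hw : DenseRange w)
    {z : ℂ} {C : ℝ} (h : ∀ n, (conj (w n) * z).re ≤ C * ‖w n‖) : ‖z‖ ≤ C := by
  have hall : ∀ v, (conj v * z).re ≤ C * ‖v‖ :=
    fun v => hw.induction_on v (isClosed_le (by fun_prop) (by fun_prop)) h
  have hz := hall z
  rw [← Complex.normSq_eq_conj_mul_self, Complex.normSq_eq_norm_sq, Complex.ofReal_re] at hz
  rcases eq_or_ne z 0 with rfl | hz0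
  · simpa using hall 1
  · nlinarith [norm_pos_iff.2 hz0]

namespace MeasureTheory

variable {α : Type*} [MeasurableSpace α]

theorem ae_norm_le_of_norm_setIntegral_le {μ : Measure α} [IsFiniteMeasure μ] {f : α → ℂ}
    (hf : Integrable f μ) {C : ℝ}
    (h : ∀ X, MeasurableSet X → ‖∫ x in X, f x ∂μ‖ ≤ C * μ.real X) : ∀ᵐ x ∂μ, ‖f x‖ ≤ C := by
  have hdir : ∀ w : ℂ, ∀ᵐ x ∂μ, (conj w * f x).re ≤ C * ‖w‖ := fun w =>
    ae_le_of_forall_setIntegral_le (hf.const_mul _).re (integrable_const _) fun X hX _ =>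
      calc ∫ x in X, (conj w * f x).re ∂μ = (conj w * ∫ x in X, f x ∂μ).re := by
            rw [← integral_const_mul, ← RCLike.re_eq_complex_re,
              ← integral_re (hf.const_mul _).integrableOn]
        _ ≤ ‖w‖ * ‖∫ x in X, f x ∂μ‖ := (Complex.re_le_norm _).trans_eq (by simp)
        _ ≤ ‖w‖ * (C * μ.real X) := by gcongr; exact h X hX
        _ = ∫ _ in X, C * ‖w‖ ∂μ := by simp; ring
  filter_upwards [ae_all_iff.2 fun n => hdir (TopologicalSpace.denseSeq ℂ n)] with x hx
  exact Complex.norm_le_of_forall_re_conj_mul_le (TopologicalSpace.denseRange_denseSeq ℂ) hx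

namespace ComplexMeasure

theorem withDensityᵥ_rnDeriv_eq (c : ComplexMeasure α) (μ : Measure α) [SigmaFinite μ]
    (h : c ≪ᵥ μ.toENNRealVectorMeasure) : μ.withDensityᵥ (c.rnDeriv μ) = c := by
  rw [absolutelyContinuous_ennreal_iff] at h
  ext X hX : 1
  have hint := (c.integrable_rnDeriv μ).integrableOn (s := X)
  rw [withDensityᵥ_apply (c.integrable_rnDeriv μ) hX]
  apply Complex.ext
  · rw [← RCLike.re_eq_complex_re, ← integral_re hint]
    exact (withDensityᵥ_apply (SignedMeasure.integrable_rnDeriv _ _) hX).symm.trans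
      (by rw [c.re.withDensityᵥ_rnDeriv_eq μ h.1]; rfl)
  · rw [← RCLike.im_eq_complex_im, ← integral_im hint]
    exact (withDensityᵥ_apply (SignedMeasure.integrable_rnDeriv _ _) hX).symm.trans
      (by rw [c.im.withDensityᵥ_rnDeriv_eq μ h.2]; rfl)

theorem absolutelyContinuous_of_norm_le {c : ComplexMeasure α} {μ : Measure α}
    (h : ∀ X, MeasurableSet X → ‖c X‖ ≤ μ.real X) : c ≪ᵥ μ.toENNRealVectorMeasure :=
  .mk fun X hX hμX => by
    rw [Measure.toENNRealVectorMeasure_apply_measurable hX] at hμX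
    simpa [Measure.real, hμX] using h X hX

variable {μ : Measure α} [IsFiniteMeasure μ]

theorem ae_norm_rnDeriv_le_one {c : ComplexMeasure α}
    (h : ∀ X, MeasurableSet X → ‖c X‖ ≤ μ.real X) : ∀ᵐ x ∂μ, ‖c.rnDeriv μ x‖ ≤ 1 := by
  refine ae_norm_le_of_norm_setIntegral_le (c.integrable_rnDeriv μ) fun X hX => ?_
  rw [← withDensityᵥ_apply (c.integrable_rnDeriv μ) hX,
    c.withDensityᵥ_rnDeriv_eq μ (absolutelyContinuous_of_norm_le h), one_mul]
  exact h X hX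

theorem eq_withDensityᵥ_of_smul_add_smul_eq {u : α → ℂ} (hu : Integrable u μ)
    (hu_norm : ∀ᵐ x ∂μ, ‖u x‖ = 1) {c₁ c₂ : ComplexMeasure α}
    (h₁ : ∀ X, MeasurableSet X → ‖c₁ X‖ ≤ μ.real X) (h₂ : ∀ X, MeasurableSet X → ‖c₂ X‖ ≤ μ.real X)
    {t : ℝ} (ht₀ : 0 < t) (ht₁ : t < 1) (h : t • c₁ + (1 - t) • c₂ = μ.withDensityᵥ u) :
    c₁ = μ.withDensityᵥ u := by
  have hc₁ := c₁.withDensityᵥ_rnDeriv_eq μ (absolutelyContinuous_of_norm_le h₁)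
  have hc₂ := c₂.withDensityᵥ_rnDeriv_eq μ (absolutelyContinuous_of_norm_le h₂)
  have hsum : t • c₁.rnDeriv μ + (1 - t) • c₂.rnDeriv μ =ᵐ[μ] u := by
    refine Integrable.ae_eq_of_withDensityᵥ_eq
      (((c₁.integrable_rnDeriv μ).smul t).add ((c₂.integrable_rnDeriv μ).smul (1 - t))) hu ?_
    rw [withDensityᵥ_add ((c₁.integrable_rnDeriv μ).smul t)
      ((c₂.integrable_rnDeriv μ).smul (1 - t)), withDensityᵥ_smul, withDensityᵥ_smul, hc₁, hc₂, h]
  rw [← hc₁]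
  refine WithDensityᵥEq.congr_ae ?_
  filter_upwards [hsum, ae_norm_rnDeriv_le_one h₁, ae_norm_rnDeriv_le_one h₂, hu_norm]
    with x hx hx₁ hx₂ hxu
  have hext := StrictConvexSpace.sphere_subset_extremePoints_closedBall (0 : ℂ) one_ne_zero
    (mem_sphere_zero_iff_norm.2 hxu)
  exact hext.2 (mem_closedBall_zero_iff.2 hx₁) (mem_closedBall_zero_iff.2 hx₂)
    ⟨t, 1 - t, ht₀, by linarith, by ring, hx⟩

end ComplexMeasure

end MeasureTheory

theorem ContinuousLinearMap.IsPositive.norm_inner_sq_le {𝕜 E : Type*} [RCLike 𝕜]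
    [NormedAddCommGroup E] [InnerProductSpace 𝕜 E] {A : E →L[𝕜] E} (hA : A.IsPositive) (x y : E) :
    ‖inner 𝕜 x (A y)‖ ^ 2 ≤ RCLike.re (inner 𝕜 x (A x)) * RCLike.re (inner 𝕜 y (A y)) := by
  let form : PreInnerProductSpace.Core 𝕜 E :=
    { inner a b := inner 𝕜 a (A b)
      conj_inner_symm a b := by rw [inner_conj_symm, hA.inner_left_eq_inner_right]
      re_inner_nonneg := hA.re_inner_nonneg_right
      add_left a b z := inner_add_left a b _
      smul_left a b r := inner_smul_left a _ r }
  calc ‖inner 𝕜 x (A y)‖ ^ 2 = ‖inner 𝕜 x (A y)‖ * ‖inner 𝕜 y (A x)‖ := by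
        rw [sq, ← hA.inner_left_eq_inner_right y, ← inner_conj_symm, RCLike.norm_conj]
    _ ≤ _ := @InnerProductSpace.Core.inner_mul_inner_self_le 𝕜 E _ _ _ form x y

theorem LinearIsometryEquiv.symm_apply_eq_conj_smul {E : Type*} [NormedAddCommGroup E]
    [InnerProductSpace ℂ E] (U : E ≃ₗᵢ[ℂ] E) {φ : E} {a : ℂ} (ha : ‖a‖ = 1)
    (hφ : U φ = a • φ) : U.symm φ = conj a • φ := by
  rw [U.symm_apply_eq, map_smul, hφ, smul_smul, Complex.conj_mul', ha]
  simp

theorem MeasureTheory.Measure.isMulLeftInvariant_eq_of_isProbabilityMeasure {G : Type*}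
    [Group G] [TopologicalSpace G] [IsTopologicalGroup G] [CompactSpace G] [MeasurableSpace G]
    [BorelSpace G] (ν μ : Measure G) [μ.IsHaarMeasure] [IsProbabilityMeasure μ]
    [ν.IsMulLeftInvariant] [IsProbabilityMeasure ν] : ν = μ := by
  have h := isMulInvariant_eq_smul_of_compactSpace ν μ
  have hfactor : ν.haarScalarFactor μ = 1 := by
    simpa using (congrArg (· Set.univ) h).symm
  rw [h, hfactor, one_smul]

theorem HilbertBasis.continuousLinearMap_ext {ι 𝕜 E : Type*} [RCLike 𝕜] [NormedAddCommGroup E]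
    [InnerProductSpace 𝕜 E] (b : HilbertBasis ι 𝕜 E) {A B : E →L[𝕜] E}
    (h : ∀ i j, inner 𝕜 (b j) (A (b i)) = inner 𝕜 (b j) (B (b i))) : A = B := by
  have hdense : Dense (Submodule.span 𝕜 (Set.range b) : Set E) := by
    simp [← Submodule.topologicalClosure_coe, dense_iff_closure_eq]
  refine ContinuousLinearMap.ext_on hdense ?_
  rintro _ ⟨i, rfl⟩
  exact b.repr.injective (lp.ext (funext fun j => by simp [b.repr_apply_apply, h i j]))

namespace POVM

variable {Ω : Type*} [MeasurableSpace Ω] {𝓗 : Type*} [NormedAddCommGroup 𝓗]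
  [InnerProductSpace ℂ 𝓗] [CompleteSpace 𝓗]

theorem toFun_empty (F : POVM Ω 𝓗) : F.toFun ∅ = 0 := by
  refine ContinuousLinearMap.ext fun ψ => ext_inner_left ℂ fun φ => ?_
  have h := F.m_iUnion' (fun _ => ∅) (fun _ => .empty) (fun _ _ _ => disjoint_bot_left) φ ψ
  rw [Set.iUnion_empty] at h
  simpa using summable_const_iff _ |>.1 h.summable

def complexMeasure (F : POVM Ω 𝓗) (φ ψ : 𝓗) : ComplexMeasure Ω where
  measureOf' X := ⟪φ, F.toFun X ψ⟫
  empty' := by simp [F.toFun_empty]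
  not_measurable' X hX := by simp [F.not_measurable' X hX]
  m_iUnion' _ hX hd := F.m_iUnion' _ hX hd φ ψ

theorem complexMeasure_apply (F : POVM Ω 𝓗) (φ ψ : 𝓗) (X : Set Ω) :
    F.complexMeasure φ ψ X = ⟪φ, F.toFun X ψ⟫ := rfl

theorem ext_of_complexMeasure {ι : Type*} (e : HilbertBasis ι ℂ 𝓗) {F₁ F₂ : POVM Ω 𝓗}
    (h : ∀ i j, F₁.complexMeasure (e j) (e i) = F₂.complexMeasure (e j) (e i)) : F₁ = F₂ := by
  suffices F₁.toFun = F₂.toFun by cases F₁; cases F₂; congr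
  funext X
  by_cases hX : MeasurableSet X
  · exact e.continuousLinearMap_ext fun i j => congrArg (· X) (h i j)
  · rw [F₁.not_measurable' X hX, F₂.not_measurable' X hX]

theorem complexMeasure_eq_smul_add_smul {F F₁ F₂ : POVM Ω 𝓗} {t : ℝ}
    (h : ∀ X, F.toFun X = (t : ℂ) • F₁.toFun X + ((1 - t : ℝ) : ℂ) • F₂.toFun X) (φ ψ : 𝓗) :
    F.complexMeasure φ ψ = t • F₁.complexMeasure φ ψ + (1 - t) • F₂.complexMeasure φ ψ := by
  ext X : 1
  simp [complexMeasure_apply, h, Complex.real_smul]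

def measure (F : POVM Ω 𝓗) (φ : 𝓗) : Measure Ω :=
  Measure.ofMeasurable (fun X _ => .ofReal (⟪φ, F.toFun X φ⟫).re) (by simp [F.toFun_empty])
    fun X hX hd => by
      have hsum : HasSum (fun n => (⟪φ, F.toFun (X n) φ⟫).re) (⟪φ, F.toFun (⋃ n, X n) φ⟫).re :=
        Complex.reCLM.hasSum (F.m_iUnion' X hX hd φ φ)
      rw [← hsum.tsum_eq]
      exact ENNReal.ofReal_tsum_of_nonneg
        (fun n => (F.isPositive' _ (hX n)).re_inner_nonneg_right φ) hsum.summable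

theorem complexMeasure_self_apply (F : POVM Ω 𝓗) (φ : 𝓗) {X : Set Ω} (hX : MeasurableSet X) :
    F.complexMeasure φ φ X = (F.measure φ).real X := by
  have hpos := F.isPositive' X hX
  have hre : 0 ≤ (⟪φ, F.toFun X φ⟫).re := hpos.re_inner_nonneg_right φ
  rw [Measure.real, measure, Measure.ofMeasurable_apply _ hX, ENNReal.toReal_ofReal hre,
    complexMeasure_apply]
  exact Complex.ext rfl (RCLike.nonneg_iff.1 (hpos.inner_nonneg_right φ)).2

theorem isProbabilityMeasure_measure (F : POVM Ω 𝓗) {φ : 𝓗} (hφ : ‖φ‖ = 1) :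
    IsProbabilityMeasure (F.measure φ) :=
  ⟨by simp [measure, Measure.ofMeasurable_apply _ MeasurableSet.univ, F.normalized', hφ]⟩

section Covariant

variable {G : Type*} [Group G] {U : G → 𝓗 ≃ₗᵢ[ℂ] 𝓗}

theorem Covariant.measure_smul [MulAction G Ω] [MeasurableConstSMul G Ω] {F : POVM Ω 𝓗}
    (hF : F.Covariant U) {φ : 𝓗} {a : G → ℂ} (ha : ∀ g, ‖a g‖ = 1) (hφ : ∀ g, U g φ = a g • φ)
    (g : G) {X : Set Ω} (hX : MeasurableSet X) : F.measure φ (g • X) = F.measure φ X := by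
  rw [measure, Measure.ofMeasurable_apply _ (hX.const_smul g), Measure.ofMeasurable_apply _ hX,
    hF g X hX, (U g).symm_apply_eq_conj_smul (ha g) (hφ g), inner_smul_left, map_smul,
    inner_smul_right, ← mul_assoc, Complex.conj_conj, Complex.mul_conj', ha g]
  simp

variable [TopologicalSpace G] [IsTopologicalGroup G] [CompactSpace G] [MeasurableSpace G]
  [BorelSpace G] (μ : Measure G) [μ.IsHaarMeasure] [IsProbabilityMeasure μ]

theorem Covariant.measure_eq {F : POVM G 𝓗} (hF : F.Covariant U) {φ : 𝓗} (hφ₁ : ‖φ‖ = 1)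
    {a : G → ℂ} (ha : ∀ g, ‖a g‖ = 1) (hφ : ∀ g, U g φ = a g • φ) : F.measure φ = μ := by
  have := F.isProbabilityMeasure_measure hφ₁
  have : (F.measure φ).IsMulLeftInvariant := by
    refine (forall_measure_preimage_mul_iff _).1 fun g A hA => ?_
    change F.measure φ ((g • ·) ⁻¹' A) = _
    rw [Set.preimage_smul, hF.measure_smul ha hφ _ hA]
  exact Measure.isMulLeftInvariant_eq_of_isProbabilityMeasure _ μ

theorem Covariant.norm_complexMeasure_le {F : POVM G 𝓗} (hF : F.Covariant U) {ι : Type*}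
    {v : ι → 𝓗} (hv : ∀ i, ‖v i‖ = 1) {χ : ι → G → ℂ} (hχ : ∀ i g, ‖χ i g‖ = 1)
    (hU : ∀ g i, U g (v i) = χ i g • v i) (i j : ι) {X : Set G} (hX : MeasurableSet X) :
    ‖F.complexMeasure (v j) (v i) X‖ ≤ μ.real X := by
  have hdiag : ∀ k, RCLike.re ⟪v k, F.toFun X (v k)⟫ = μ.real X := fun k => by
    rw [← complexMeasure_apply, F.complexMeasure_self_apply _ hX,
      hF.measure_eq μ (hv k) (hχ k) (hU · k)]
    exact Complex.ofReal_re _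
  have hcs := (F.isPositive' X hX).norm_inner_sq_le (v j) (v i)
  rw [hdiag, hdiag, ← sq] at hcs
  exact (pow_le_pow_iff_left₀ (norm_nonneg _) measureReal_nonneg two_ne_zero).1 hcs

end Covariant

end POVM

theorem extremal_covariant_povm_stmt12_general
    {G : Type*} [CommGroup G] [TopologicalSpace G] [IsTopologicalGroup G] [CompactSpace G]
    [MeasurableSpace G] [BorelSpace G]
    (μG : Measure G) [μG.IsHaarMeasure] [IsProbabilityMeasure μG]
    {ι : Type*}
    (χ : ι → G → ℂ)
    (hχ_cont : ∀ i, Continuous (χ i))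
    (hχ_norm : ∀ i g, ‖χ i g‖ = 1)
    {𝓗 : Type*} [NormedAddCommGroup 𝓗] [InnerProductSpace ℂ 𝓗] [CompleteSpace 𝓗]
    (e : HilbertBasis ι ℂ 𝓗)
    (U : G → 𝓗 ≃ₗᵢ[ℂ] 𝓗)
    (hU : ∀ (g : G) (i : ι), U g (e i) = χ i g • e i)
    {𝒦 : Type*} [NormedAddCommGroup 𝒦] [InnerProductSpace ℂ 𝒦]
    (vv : 𝒦) (hvv : ‖vv‖ = 1)
    (c : ι → ℂ) (hc : ∀ i, ‖c i‖ = 1)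
    (E : POVM G 𝓗)
    (hE : ∀ (i j : ι) (X : Set G), MeasurableSet X →
      ⟪e j, E.toFun X (e i)⟫ =
        ⟪c j • vv, c i • vv⟫ * ∫ g in X, (starRingEnd ℂ) (χ i g) * χ j g ∂μG) :
    E.IsExtremeCovariant U := by
  intro E₁ E₂ hE₁ hE₂ t ht₀ ht₁ hsum
  set u : ι → ι → G → ℂ := fun i j g => ⟪c j • vv, c i • vv⟫ * (conj (χ i g) * χ j g)
  have hu_norm : ∀ i j g, ‖u i j g‖ = 1 := fun i j g => by simp [u, hc, hχ_norm, hvv]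
  have hu_int : ∀ i j, Integrable (u i j) μG := fun i j =>
    .of_bound (by fun_prop : Continuous (u i j)).aestronglyMeasurable 1
      (ae_of_all _ fun g => (hu_norm i j g).le)
  have hdens : ∀ i j, E.complexMeasure (e j) (e i) = μG.withDensityᵥ (u i j) := fun i j => by
    ext X hX : 1
    rw [withDensityᵥ_apply (hu_int i j) hX, POVM.complexMeasure_apply, hE i j X hX,
      integral_const_mul]
  have hbound : ∀ F : POVM G 𝓗, F.Covariant U →
      ∀ i j X, MeasurableSet X → ‖F.complexMeasure (e j) (e i) X‖ ≤ μG.real X :=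
    fun F hF => hF.norm_complexMeasure_le μG (fun i => e.orthonormal.1 i) hχ_norm hU
  have hcomb := POVM.complexMeasure_eq_smul_add_smul hsum
  refine ⟨POVM.ext_of_complexMeasure e fun i j => ?_, POVM.ext_of_complexMeasure e fun i j => ?_⟩
  · rw [hdens]
    exact ComplexMeasure.eq_withDensityᵥ_of_smul_add_smul_eq (hu_int i j)
      (ae_of_all _ (hu_norm i j)) (hbound E₁ hE₁ i j) (hbound E₂ hE₂ i j) ht₀ ht₁
      ((hcomb _ _).symm.trans (hdens i j))
  · rw [hdens]
    refine ComplexMeasure.eq_withDensityᵥ_of_smul_add_smul_eq (hu_int i j)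
      (ae_of_all _ (hu_norm i j)) (hbound E₂ hE₂ i j) (hbound E₁ hE₁ i j) (t := 1 - t)
      (by linarith) (by linarith) ?_
    rw [sub_sub_cancel, add_comm, ← hdens, hcomb]

/-- (Compact abelian `G` acting on itself, multiplicity free case,
rank one kernels.)  If `v_π = c_π v` with `v` a unit vector and `|c_π| = 1`, then the
associated covariant POVM is an extreme point of the convex set of `U`-covariant POVMs. -/
theorem extremal_covariant_povm_stmt12
    {G : Type*} [CommGroup G] [TopologicalSpace G] [IsTopologicalGroup G] [CompactSpace G]
    [T2Space G] [SecondCountableTopology G] [MeasurableSpace G] [BorelSpace G]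
    (μG : Measure G) [μG.IsHaarMeasure] [IsProbabilityMeasure μG]
    {ι : Type*} [Countable ι]
    (χ : ι → G → ℂ)
    (hχ_cont : ∀ i, Continuous (χ i))
    (hχ_mul : ∀ i (g g' : G), χ i (g * g') = χ i g * χ i g')
    (hχ_norm : ∀ i g, ‖χ i g‖ = 1)
    (hχ_inj : Function.Injective χ)
    {𝓗 : Type*} [NormedAddCommGroup 𝓗] [InnerProductSpace ℂ 𝓗] [CompleteSpace 𝓗]
    (e : HilbertBasis ι ℂ 𝓗)
    (U : G → 𝓗 ≃ₗᵢ[ℂ] 𝓗)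
    (hU : ∀ (g : G) (i : ι), U g (e i) = χ i g • e i)
    {𝒦 : Type*} [NormedAddCommGroup 𝒦] [InnerProductSpace ℂ 𝒦] [CompleteSpace 𝒦]
    (vv : 𝒦) (hvv : ‖vv‖ = 1)
    (c : ι → ℂ) (hc : ∀ i, ‖c i‖ = 1)
    (E : POVM G 𝓗) (hcov : E.Covariant U)
    (hE : ∀ (i j : ι) (X : Set G), MeasurableSet X →
      ⟪e j, E.toFun X (e i)⟫ =
        ⟪c j • vv, c i • vv⟫ * ∫ g in X, (starRingEnd ℂ) (χ i g) * χ j g ∂μG) :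
    E.IsExtremeCovariant U :=
  extremal_covariant_povm_stmt12_general μG χ hχ_cont hχ_norm e U hU vv hvv c hc E hE
end
end

section
/- Let G be a compact, Hausdorff, second countable abelian topological group, H a closed subgroup, Ω = G/H with canonical projection q and normalized G-invariant measure μ_Ω = q_*μ_G, and let H^⊥ = { π ∈ Ĝ : π(h) = 1 for all h ∈ H }. Let π, ρ ∈ Ĝ. If π⁻¹ρ ∉ H^⊥, then ∫_{q⁻¹(X)} \overline{π(g)} ρ(g) dμ_G(g) = 0 for every Borel set X ⊆ Ω. If π⁻¹ρ ∈ H^⊥, so that the function g ↦ \overline{π(g)} ρ(g) is H-invariant and descends to a continuous function F on Ω, then ∫_{q⁻¹(X)} \overline{π(g)} ρ(g) dμ_G(g) = ∫_X F dμ_Ω for every Borel set X ⊆ Ω. -/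
/-!
Left translation by `h ∈ H` preserves both the Haar measure and every saturated set `q⁻¹(X)`,
while it multiplies the multiplicative function `conj π · ρ` by its value at `h`. Hence the
integral over `q⁻¹(X)` is fixed by multiplication by `conj (π h) · ρ h`, so it vanishes as soon
as this value differs from `1` for some `h ∈ H`. Otherwise `conj π · ρ` is constant on cosets,
descends to a continuous `F` on `G ⧸ H`, and the identity is the change of variables for `q_* μ_G`.
-/

open MeasureTheory

section LeftInvariantSet

variable {G : Type*} [Group G] [MeasurableSpace G] [MeasurableMul G]
  (μ : Measure G) [μ.IsMulLeftInvariant]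

theorem setIntegral_comp_mul_left_of_preimage_eq {E : Type*} [NormedAddCommGroup E]
    [NormedSpace ℝ E] (f : G → E) {s : Set G} {h : G} (hs : (h * ·) ⁻¹' s = s) :
    ∫ g in s, f (h * g) ∂μ = ∫ g in s, f g ∂μ := by
  simpa only [hs] using
    (measurePreserving_mul_left μ h).setIntegral_preimage_emb (measurableEmbedding_mulLeft h) f s

theorem setIntegral_eq_zero_of_map_mul_of_ne_one {𝕜 : Type*} [RCLike 𝕜] {χ : G → 𝕜}
    (hχ : ∀ g g', χ (g * g') = χ g * χ g') {s : Set G} {h : G} (hs : (h * ·) ⁻¹' s = s)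
    (hh : χ h ≠ 1) : ∫ g in s, χ g ∂μ = 0 := by
  have hfix : χ h * ∫ g in s, χ g ∂μ = ∫ g in s, χ g ∂μ := by
    rw [← integral_const_mul]
    simp_rw [← hχ]
    exact setIntegral_comp_mul_left_of_preimage_eq μ χ hs
  have hzero : (χ h - 1) * ∫ g in s, χ g ∂μ = 0 := by rw [sub_mul, hfix, one_mul, sub_self]
  exact (mul_eq_zero.mp hzero).resolve_left (sub_ne_zero.mpr hh)

end LeftInvariantSet

namespace QuotientGroup

variable {G : Type*} [Group G] {H : Subgroup G}

theorem preimage_mul_left_preimage_mk [H.Normal] {h : G} (hh : h ∈ H) (X : Set (G ⧸ H)) :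
    (h * ·) ⁻¹' ((↑) ⁻¹' X : Set G) = (↑) ⁻¹' X := by
  ext g
  simp only [Set.mem_preimage, mk_mul, (eq_one_iff h).mpr hh, one_mul]

theorem exists_continuous_comp_mk_eq_of_map_mul {M : Type*} [TopologicalSpace G] [MulOneClass M]
    [TopologicalSpace M] {χ : G → M} (hχc : Continuous χ) (hχ : ∀ g g', χ (g * g') = χ g * χ g')
    (hH : ∀ h ∈ H, χ h = 1) : ∃ F : G ⧸ H → M, Continuous F ∧ ∀ g : G, F g = χ g := by
  have hconst : ∀ a b : G, leftRel H a b → χ a = χ b := fun a b hab => by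
    rw [← mul_inv_cancel_left a b, hχ, hH _ (leftRel_apply.mp hab), mul_one]
  exact ⟨Quotient.lift χ hconst, hχc.quotient_lift hconst, fun _ => rfl⟩

end QuotientGroup

theorem extremal_covariant_povm_stmt15_general
    {G : Type*} [CommGroup G] [TopologicalSpace G] [IsTopologicalGroup G]
    [MeasurableSpace G] [BorelSpace G]
    (μG : Measure G) [μG.IsHaarMeasure]
    (H : Subgroup G) [MeasurableSpace (G ⧸ H)] [BorelSpace (G ⧸ H)]
    (χπ χρ : G → ℂ)
    (hπ_cont : Continuous χπ) (hρ_cont : Continuous χρ)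
    (hπ_mul : ∀ g g' : G, χπ (g * g') = χπ g * χπ g')
    (hρ_mul : ∀ g g' : G, χρ (g * g') = χρ g * χρ g') :
    (¬ (∀ h ∈ H, (starRingEnd ℂ) (χπ h) * χρ h = 1) →
      ∀ X : Set (G ⧸ H), MeasurableSet X →
        ∫ g in ((QuotientGroup.mk : G → G ⧸ H) ⁻¹' X),
          (starRingEnd ℂ) (χπ g) * χρ g ∂μG = 0) ∧
    ((∀ h ∈ H, (starRingEnd ℂ) (χπ h) * χρ h = 1) →
      ∃ F : G ⧸ H → ℂ, Continuous F ∧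
        (∀ g : G, F (QuotientGroup.mk g) = (starRingEnd ℂ) (χπ g) * χρ g) ∧
        ∀ X : Set (G ⧸ H), MeasurableSet X →
          ∫ g in ((QuotientGroup.mk : G → G ⧸ H) ⁻¹' X),
            (starRingEnd ℂ) (χπ g) * χρ g ∂μG =
          ∫ ω in X, F ω ∂(μG.map (QuotientGroup.mk : G → G ⧸ H))) := by
  have hχ_mul : ∀ g g' : G, (starRingEnd ℂ) (χπ (g * g')) * χρ (g * g') =
      (starRingEnd ℂ) (χπ g) * χρ g * ((starRingEnd ℂ) (χπ g') * χρ g') := by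
    intro g g'
    simp only [hπ_mul, hρ_mul, map_mul]
    ring
  refine ⟨fun hH X _ => ?_, fun hH => ?_⟩
  · obtain ⟨h, hh, hne⟩ := not_forall₂.mp hH
    exact setIntegral_eq_zero_of_map_mul_of_ne_one μG hχ_mul
      (QuotientGroup.preimage_mul_left_preimage_mk hh X) hne
  · obtain ⟨F, hFc, hF⟩ := QuotientGroup.exists_continuous_comp_mk_eq_of_map_mul
      (χ := fun g => (starRingEnd ℂ) (χπ g) * χρ g) (by fun_prop) hχ_mul hH
    refine ⟨F, hFc, hF, fun X hX => ?_⟩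
    rw [setIntegral_map hX hFc.aestronglyMeasurable QuotientGroup.continuous_mk.aemeasurable]
    simp only [hF]

/-- Orthogonality relations on the quotient: for characters `π, ρ` of a
compact abelian group `G` and a closed subgroup `H`, if `π⁻¹ρ ∉ H^⊥` then
`∫_{q⁻¹(X)} conj(π) ρ dμ_G = 0` for every Borel `X ⊆ Ω = G/H`; if `π⁻¹ρ ∈ H^⊥` then
`conj(π) ρ` descends to a continuous function `F` on `Ω` and
`∫_{q⁻¹(X)} conj(π) ρ dμ_G = ∫_X F dμ_Ω` with `μ_Ω = q_* μ_G`. -/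
theorem extremal_covariant_povm_stmt15
    {G : Type*} [CommGroup G] [TopologicalSpace G] [IsTopologicalGroup G] [CompactSpace G]
    [T2Space G] [SecondCountableTopology G] [MeasurableSpace G] [BorelSpace G]
    (μG : Measure G) [μG.IsHaarMeasure] [IsProbabilityMeasure μG]
    (H : Subgroup G) [MeasurableSpace (G ⧸ H)] [BorelSpace (G ⧸ H)]
    (χπ χρ : G → ℂ)
    (hπ_cont : Continuous χπ) (hρ_cont : Continuous χρ)
    (hπ_mul : ∀ g g' : G, χπ (g * g') = χπ g * χπ g')
    (hρ_mul : ∀ g g' : G, χρ (g * g') = χρ g * χρ g')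
    (hπ_norm : ∀ g, ‖χπ g‖ = 1) (hρ_norm : ∀ g, ‖χρ g‖ = 1) :
    (¬ (∀ h ∈ H, (starRingEnd ℂ) (χπ h) * χρ h = 1) →
      ∀ X : Set (G ⧸ H), MeasurableSet X →
        ∫ g in ((QuotientGroup.mk : G → G ⧸ H) ⁻¹' X),
          (starRingEnd ℂ) (χπ g) * χρ g ∂μG = 0) ∧
    ((∀ h ∈ H, (starRingEnd ℂ) (χπ h) * χρ h = 1) →
      ∃ F : G ⧸ H → ℂ, Continuous F ∧
        (∀ g : G, F (QuotientGroup.mk g) = (starRingEnd ℂ) (χπ g) * χρ g) ∧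
        ∀ X : Set (G ⧸ H), MeasurableSet X →
          ∫ g in ((QuotientGroup.mk : G → G ⧸ H) ⁻¹' X),
            (starRingEnd ℂ) (χπ g) * χρ g ∂μG =
          ∫ ω in X, F ω ∂(μG.map (QuotientGroup.mk : G → G ⧸ H))) :=
  extremal_covariant_povm_stmt15_general μG H χπ χρ hπ_cont hρ_cont hπ_mul hρ_mul
end
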